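/- arXiv:0904.4472 — 2 statements merged into one kernel-verified Lean document; each statement's English description precedes it below -/
import Mathlib

section
/- Let w = w₁⋯w_p be a reduced expression for w in a Coxeter group, let σ be a constant mask on w, and let σ' be obtained from σ by changing the rightmost 0-entry of σ to 1. Then σ' is also a constant mask on w. -/
open CoxeterSystem

variable {B W : Type*} [Group W] {M : CoxeterMatrix B}

/-- The subword of `ω` selected by the mask `σ` (positions with mask-value `true`). -/
def maskSubword {α : Type*} (ω : List α) (σ : List Bool) : List α :=
  (ω.zip σ).filterMap (fun p => if p.2 then some p.1 else none)

/-- The group element `w^σ` determined by a mask `σ` on the word `ω`. -/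
def maskProd (cs : CoxeterSystem M W) (ω : List B) (σ : List Bool) : W :=
  cs.wordProd (maskSubword ω σ)

/-- Bruhat order: `x ≤ w` iff some reduced word for `w` has a subword whose product is `x`. -/
def bruhatLE (cs : CoxeterSystem M W) (x w : W) : Prop :=
  ∃ ω φ : List B, cs.IsReduced ω ∧ cs.wordProd ω = w ∧ φ.Sublist ω ∧ cs.wordProd φ = x

/-- Strict Bruhat order. -/
def bruhatLT (cs : CoxeterSystem M W) (x w : W) : Prop :=
  bruhatLE cs x w ∧ x ≠ w

/-- `z` covers `x` in Bruhat order. -/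
def bruhatCovers (cs : CoxeterSystem M W) (x z : W) : Prop :=
  bruhatLT cs x z ∧ cs.length z = cs.length x + 1

/-- Position `j` (0-indexed) is a defect of the mask `σ` on the word `ω`:
multiplying the product of the first `j` masked letters by `ω_j` decreases length. -/
def IsDefect (cs : CoxeterSystem M W) (ω : List B) (σ : List Bool) (j : ℕ) : Prop :=
  ∃ h : j < ω.length, cs.IsRightDescent (maskProd cs (ω.take j) (σ.take j)) (ω.get ⟨j, h⟩)

/-- A constant mask: a mask with no defect positions. -/
def IsConstantMask (cs : CoxeterSystem M W) (ω : List B) (σ : List Bool) : Prop :=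
  σ.length = ω.length ∧ ∀ j, ¬ IsDefect cs ω σ j

/-!
Write `x` for the product of the letters that `σ` selects before position `k`, `a = w_k`, and `ν`
for the letters after `k`, all of which `σ` selects. From position `k` on, the prefix products of
`σ` are `x ν_{<j}` and those of `σ'` are `x a ν_{<j}`, so constancy of `σ` gives `ℓ(x a) > ℓ x` and
`ℓ(x ν) = ℓ x + |ν|`, and constancy of `σ'` amounts to `ℓ(x a ν) = ℓ(x a) + |ν|`. If this failed,
let `b` be the first letter of `ν` where it does. The reflection `t = x a x⁻¹` is a left inversion
of `x ν_{≤b}`, so by strong exchange it deletes one letter from `r ν_{≤b}`, where `r` is a reduced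
word for `x`: deleting a letter of `r ν_{<b}` makes `x a ν_{<b}` too short, and deleting `b` gives
`a ν_{<b} b = ν_{<b}`, against `w` being reduced.

Strong exchange is proved with the sign action of `W` on `T × ℤ/2` (Björner–Brenti, Thm. 1.4.3).
-/

section Masks

variable {α : Type*}

theorem maskSubword_append {ω₁ ω₂ : List α} {σ₁ σ₂ : List Bool} (h : ω₁.length = σ₁.length) :
    maskSubword (ω₁ ++ ω₂) (σ₁ ++ σ₂) = maskSubword ω₁ σ₁ ++ maskSubword ω₂ σ₂ := by
  simp [maskSubword, List.zip_append h]

theorem maskSubword_replicate_true (ω : List α) (n : ℕ) :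
    maskSubword ω (List.replicate n true) = ω.take n := by
  induction ω generalizing n with
  | nil => simp [maskSubword]
  | cons a ω ih => cases n <;> simp_all [maskSubword, List.replicate_succ]

end Masks

namespace CoxeterSystem

variable (cs : CoxeterSystem M W)

local prefix:100 "s " => cs.simple
local prefix:100 "π " => cs.wordProd
local prefix:100 "ℓ " => cs.length
local prefix:100 "ris " => cs.rightInvSeq
local prefix:100 "lis " => cs.leftInvSeq

theorem simple_mul_mul_simple_eq_simple_iff {i : B} {t : W} : s i * t * s i = s i ↔ t = s i := by
  constructor
  · intro h
    simpa [mul_assoc] using congrArg (fun x => s i * x * s i) h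
  · rintro rfl
    simp

open Classical in
/-- Björner–Brenti's permutation `(t, ε) ↦ (sᵢ t sᵢ, ε + [t = sᵢ])`, with `T` enlarged to all of
`W`, which costs nothing. -/
noncomputable def signFlip (i : B) : Equiv.Perm (W × ZMod 2) :=
  Function.Involutive.toPerm (fun p => (s i * p.1 * s i, p.2 + if p.1 = s i then 1 else 0)) <| by
    rintro ⟨t, ε⟩
    ext
    · simp [mul_assoc]
    · by_cases h : t = s i
      · simp [h, add_assoc, CharTwo.add_self_eq_zero]
      · simp [h, cs.simple_mul_mul_simple_eq_simple_iff]

open Classical in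
theorem signFlip_apply (i : B) (t : W) (ε : ZMod 2) :
    cs.signFlip i (t, ε) = (s i * t * s i, ε + if t = s i then 1 else 0) :=
  rfl

open Classical in
theorem signFlip_mul_pow_apply (i j : B) (r : ℕ) (t : W) (ε : ZMod 2) :
    ((cs.signFlip i * cs.signFlip j) ^ r) (t, ε) =
      ((s i * s j) ^ r * t * ((s i * s j) ^ r)⁻¹,
        ε + ∑ q ∈ Finset.range (2 * r), if (s i * s j) ^ q * t = s j then 1 else 0) := by
  set c := s i * s j with hc
  have hjc : s j * c = c⁻¹ * s j := by simp [hc, mul_assoc]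
  induction r generalizing t ε with
  | zero => simp
  | succ r ih =>
    have hi : s j * t * s j = s i ↔ c * t = s j := by
      rw [← mul_right_inj (s i), ← mul_left_inj (s j)]
      simp [hc, mul_assoc]
    have shift : ∀ q, c ^ q * (s i * (s j * t * s j) * s i) = s j ↔ c ^ (q + 2) * t = s j := by
      intro q
      rw [show s i * (s j * t * s j) * s i = c * t * c⁻¹ by simp [hc, mul_assoc],
        ← mul_left_inj c, ← mul_right_inj c]
      simp only [mul_assoc, inv_mul_cancel, mul_one, hjc, mul_inv_cancel_left]
      group
    rw [pow_succ, Equiv.Perm.mul_apply, Equiv.Perm.mul_apply, signFlip_apply,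
      signFlip_apply, ih]
    ext
    · simp only [hc, mul_inv_rev, inv_simple, pow_succ]
      group
    · rw [show 2 * (r + 1) = 2 * r + 1 + 1 by ring, Finset.sum_range_succ', Finset.sum_range_succ']
      simp only [hi, shift, pow_zero, one_mul, zero_add, pow_one]
      ring

theorem isLiftable_signFlip : M.IsLiftable cs.signFlip := by
  classical
  intro i j
  ext ⟨t, ε⟩ : 1
  -- `(sᵢ sⱼ) ^ q` has period `M i j`, so every term of the sum over `q < 2 M i j` occurs twice.
  rw [signFlip_mul_pow_apply, two_mul, Finset.sum_range_add]
  simp only [pow_add, cs.simple_mul_simple_pow, one_mul, inv_one, mul_one, CharTwo.add_self_eq_zero,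
    add_zero, Equiv.Perm.one_apply]

noncomputable def signAction : W →* Equiv.Perm (W × ZMod 2) :=
  cs.lift ⟨cs.signFlip, cs.isLiftable_signFlip⟩

theorem signAction_simple (i : B) : cs.signAction (s i) = cs.signFlip i :=
  cs.lift_apply_simple _ i

open Classical in
theorem signAction_wordProd (ω : List B) (t : W) (ε : ZMod 2) :
    cs.signAction (π ω) (t, ε) = (π ω * t * (π ω)⁻¹, ε + (ris ω).count t) := by
  induction ω generalizing ε with
  | nil => simp
  | cons i ω ih =>
    rw [wordProd_cons, map_mul, Equiv.Perm.mul_apply, ih, signAction_simple,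
      signFlip_apply]
    have hmem : π ω * t * (π ω)⁻¹ = s i ↔ (π ω)⁻¹ * s i * π ω = t := by
      rw [mul_inv_eq_iff_eq_mul, mul_assoc, inv_mul_eq_iff_eq_mul, eq_comm]
    ext
    · simp [mul_assoc]
    · simp only [rightInvSeq, List.count_cons, hmem, beq_iff_eq]
      push_cast
      ring

noncomputable def inversionParity (w t : W) : ZMod 2 := (cs.signAction w (t, 0)).2

theorem signAction_apply (w t : W) (ε : ZMod 2) :
    cs.signAction w (t, ε) = (w * t * w⁻¹, ε + cs.inversionParity w t) := by
  obtain ⟨ω, rfl⟩ := cs.wordProd_surjective w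
  simp [inversionParity, signAction_wordProd]

open Classical in
theorem inversionParity_wordProd (ω : List B) (t : W) :
    cs.inversionParity (π ω) t = (ris ω).count t := by
  simp [inversionParity, signAction_wordProd]

theorem inversionParity_eq_zero {w t : W} (h : ¬ ℓ (w * t) < ℓ w) :
    cs.inversionParity w t = 0 := by
  classical
  obtain ⟨ω, hω, rfl⟩ := cs.exists_isReduced w
  rw [inversionParity_wordProd, List.count_eq_zero.mpr, Nat.cast_zero]
  exact fun ht => h (cs.isRightInversion_of_mem_rightInvSeq hω ht).2

theorem inversionParity_self {t : W} (ht : cs.IsReflection t) : cs.inversionParity t t = 1 := by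
  classical
  obtain ⟨u, i, rfl⟩ := ht
  induction u using cs.simple_induction_left with
  | one => simp [inversionParity, signAction_simple, signFlip_apply]
  | mul_simple_left u k ih =>
    set t := u * s i * u⁻¹
    have hconj : s k * u * s i * (s k * u)⁻¹ = s k * t * s k := by simp [t, mul_assoc]
    rw [hconj, inversionParity, map_mul, map_mul, signAction_simple]
    have hback : s k * (s k * t * s k) * s k = t := by simp [mul_assoc]
    simp only [Equiv.Perm.mul_apply, signFlip_apply, signAction_apply, hback, ih,
      mul_inv_cancel_right, simple_mul_mul_simple_eq_simple_iff, zero_add]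
    rw [add_right_comm, CharTwo.add_self_eq_zero, zero_add]

theorem inversionParity_eq_one {w t : W} (h : cs.IsRightInversion w t) :
    cs.inversionParity w t = 1 := by
  have hw : w * t * t = w := by rw [mul_assoc, h.1.mul_self, mul_one]
  have hwt : ¬ ℓ (w * t * t) < ℓ (w * t) := by rw [hw]; exact h.2.not_gt
  calc cs.inversionParity w t = (cs.signAction (w * t * t) (t, 0)).2 := by rw [hw]; rfl
    _ = 1 := by
      rw [map_mul, Equiv.Perm.mul_apply, cs.signAction_apply t, inversionParity_self cs h.1,
        mul_inv_cancel_right, signAction_apply, cs.inversionParity_eq_zero hwt, zero_add,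
        add_zero]

theorem mem_rightInvSeq_of_isRightInversion {ω : List B} {t : W}
    (h : cs.IsRightInversion (π ω) t) : t ∈ ris ω := by
  classical
  have hodd := cs.inversionParity_eq_one h
  rw [inversionParity_wordProd] at hodd
  exact List.count_pos_iff.mp (Nat.pos_of_ne_zero fun h0 => by simp [h0] at hodd)

theorem mem_leftInvSeq_of_isLeftInversion {ω : List B} {t : W}
    (h : cs.IsLeftInversion (π ω) t) : t ∈ lis ω := by
  rw [← isRightInversion_inv_iff, ← wordProd_reverse] at h
  simpa [rightInvSeq_reverse] using cs.mem_rightInvSeq_of_isRightInversion h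

theorem exists_mul_wordProd_eq_eraseIdx {ω : List B} {t : W} (h : cs.IsLeftInversion (π ω) t) :
    ∃ m < ω.length, t * π ω = π (ω.eraseIdx m) := by
  obtain ⟨m, hm, rfl⟩ := List.mem_iff_getElem.mp (cs.mem_leftInvSeq_of_isLeftInversion h)
  rw [length_leftInvSeq] at hm
  exact ⟨m, hm, by rw [← List.getD_eq_getElem _ 1, getD_leftInvSeq_mul_wordProd]⟩

theorem length_mul_wordProd_append_left {x : W} {ν₁ ν₂ : List B}
    (h : ℓ (x * π (ν₁ ++ ν₂)) = ℓ x + (ν₁ ++ ν₂).length) : ℓ (x * π ν₁) = ℓ x + ν₁.length := by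
  have h₁ := cs.length_mul_le (x * π ν₁) (π ν₂)
  have h₂ := cs.length_mul_le x (π ν₁)
  have h₃ := cs.length_wordProd_le ν₁
  have h₄ := cs.length_wordProd_le ν₂
  rw [wordProd_append, ← mul_assoc, List.length_append] at h
  omega

theorem length_mul_wordProd_eq_iff {x : W} {ν : List B} :
    ℓ (x * π ν) = ℓ x + ν.length ↔
      ∀ m (hm : m < ν.length), ¬ cs.IsRightDescent (x * π (ν.take m)) ν[m] := by
  have hstep : ∀ m (hm : m < ν.length), x * π (ν.take (m + 1)) = x * π (ν.take m) * s ν[m] := by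
    intro m hm
    rw [← List.take_append_getElem hm, wordProd_append, wordProd_singleton, mul_assoc]
  constructor
  · intro h m hm
    rw [← List.take_append_drop (m + 1) ν] at h
    have h₁ := cs.length_mul_wordProd_append_left h
    rw [← List.take_append_getElem hm] at h₁
    have h₂ := cs.length_mul_wordProd_append_left h₁
    rw [List.take_append_getElem hm, hstep m hm] at h₁
    rw [not_isRightDescent_iff, h₁, h₂]
    simp only [List.length_take]
    omega
  · intro h
    suffices ∀ m ≤ ν.length, ℓ (x * π (ν.take m)) = ℓ x + m by
      simpa using this ν.length le_rfl
    intro m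
    induction m with
    | zero => simp
    | succ m ih =>
      intro hm
      rw [hstep m hm, (cs.not_isRightDescent_iff).mp (h m hm), ih (by omega), add_assoc]

theorem length_mul_simple_mul_wordProd {x : W} {a : B} {ν : List B}
    (hred : cs.IsReduced (a :: ν)) (ha : ℓ (x * s a) = ℓ x + 1)
    (hν : ℓ (x * π ν) = ℓ x + ν.length) : ℓ (x * s a * π ν) = ℓ x + 1 + ν.length := by
  induction ν using List.reverseRecOn with
  | nil => simpa using ha
  | append_singleton ν b ih =>
    have hν' := cs.length_mul_wordProd_append_left hν
    have hxaν := ih (by simpa using hred.take (ν.length + 1)) hν'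
    rw [wordProd_append, wordProd_singleton, ← mul_assoc]
    rcases cs.length_mul_simple (x * s a * π ν) b with h | h
    · simp [h, hxaν, add_assoc]
    exfalso
    -- `x sₐ x⁻¹` is a left inversion of `x π (ν ++ [b])`: strong exchange deletes one letter.
    obtain ⟨r, hr, rfl⟩ := cs.exists_isReduced x
    have ht : π r * s a * (π r)⁻¹ * π (r ++ ν ++ [b]) = π r * s a * π ν * s b := by
      simp [wordProd_append, mul_assoc]
    have hinv : cs.IsLeftInversion (π (r ++ ν ++ [b])) (π r * s a * (π r)⁻¹) := by
      refine ⟨⟨π r, a, rfl⟩, ?_⟩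
      rw [ht, List.append_assoc, wordProd_append, hν]
      simp only [List.length_append, List.length_singleton]
      omega
    obtain ⟨m, hm, heq⟩ := cs.exists_mul_wordProd_eq_eraseIdx hinv
    rw [ht] at heq
    simp only [List.length_append, List.length_singleton] at hm
    rcases Nat.lt_or_ge m (r ++ ν).length with hlt | hge
    · rw [List.eraseIdx_append_of_lt_length hlt, wordProd_append, wordProd_singleton,
        mul_left_inj] at heq
      have := cs.length_wordProd_le ((r ++ ν).eraseIdx m)
      rw [← heq, hxaν, List.length_eraseIdx_of_lt hlt, hr.eq, List.length_append] at this
      omega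
    · rw [List.eraseIdx_append_of_length_le hge, List.length_append,
        show m - (r.length + ν.length) = 0 by simp at hge; omega] at heq
      have hprod : π (a :: (ν ++ [b])) = π ν := by
        simpa [wordProd_append, wordProd_cons, mul_assoc] using heq
      have := cs.length_wordProd_le ν
      rw [← hprod, hred.eq] at this
      simp at this

theorem isDefect_append_congr_of_le {ω : List B} {τ σ₁ σ₂ : List Bool} {j : ℕ}
    (hj : j ≤ τ.length) : IsDefect cs ω (τ ++ σ₁) j ↔ IsDefect cs ω (τ ++ σ₂) j := by
  simp only [IsDefect, List.take_append_of_le_length hj]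

theorem isDefect_append_add_iff {β ω : List B} {τ σ : List Bool} (hlen : β.length = τ.length)
    (m : ℕ) : IsDefect cs (β ++ ω) (τ ++ σ) (τ.length + m) ↔
      ∃ hm : m < ω.length, cs.IsRightDescent
        (maskProd cs β τ * maskProd cs (ω.take m) (σ.take m)) ω[m] := by
  unfold IsDefect maskProd
  rw [List.take_append, List.take_append, hlen, Nat.add_sub_cancel_left,
    List.take_of_length_le (l := β) (by omega), List.take_of_length_le (l := τ) (by omega),
    maskSubword_append hlen, wordProd_append]
  simp [List.getElem_append_right, hlen]

theorem maskProd_cons_take_succ (a : B) (ν : List B) (b : Bool) (m : ℕ) :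
    maskProd cs ((a :: ν).take (m + 1)) ((b :: List.replicate ν.length true).take (m + 1)) =
      maskProd cs [a] [b] * π (ν.take m) := by
  rw [List.take_succ_cons, List.take_succ_cons, List.take_replicate, maskProd,
    ← List.singleton_append, ← List.singleton_append (l := List.replicate _ true),
    maskSubword_append (ω₁ := [a]) (σ₁ := [b]) rfl, maskSubword_replicate_true, wordProd_append,
    List.take_of_length_le (by simp)]
  rfl

theorem isConstantMask_append_true_of_append_false {β ν : List B} {a : B} {τ : List Bool}
    (hred : cs.IsReduced (β ++ a :: ν)) (hlen : β.length = τ.length)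
    (hσ : IsConstantMask cs (β ++ a :: ν) (τ ++ false :: List.replicate ν.length true)) :
    IsConstantMask cs (β ++ a :: ν) (τ ++ true :: List.replicate ν.length true) := by
  obtain ⟨hσlen, hnd⟩ := hσ
  have hhead : ∀ b, IsDefect cs (β ++ a :: ν) (τ ++ b :: List.replicate ν.length true)
      τ.length ↔ cs.IsRightDescent (maskProd cs β τ) a := by
    intro b
    rw [← add_zero τ.length, isDefect_append_add_iff cs hlen]
    simp [maskProd, maskSubword]
  have htail : ∀ b m, IsDefect cs (β ++ a :: ν) (τ ++ b :: List.replicate ν.length true)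
      (τ.length + (m + 1)) ↔ ∃ hm : m < ν.length,
        cs.IsRightDescent (maskProd cs β τ * maskProd cs [a] [b] * π (ν.take m)) ν[m] := by
    intro b m
    rw [isDefect_append_add_iff cs hlen, maskProd_cons_take_succ, ← mul_assoc]
    simp
  generalize maskProd cs β τ = x at hhead htail
  have hx : ℓ (x * s a) = ℓ x + 1 :=
    cs.not_isRightDescent_iff.mp fun h => hnd _ ((hhead false).mpr h)
  have hν : ℓ (x * π ν) = ℓ x + ν.length :=
    cs.length_mul_wordProd_eq_iff.mpr fun m hm h =>
      hnd _ ((htail false m).mpr ⟨hm, by simpa [maskProd, maskSubword] using h⟩)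
  have hxa : ℓ (x * s a * π ν) = ℓ (x * s a) + ν.length := by
    rw [cs.length_mul_simple_mul_wordProd (by simpa using hred.drop β.length) hx hν, hx]
  refine ⟨by simpa using hσlen, fun j hj => ?_⟩
  rcases le_or_gt j τ.length with hle | hlt
  · exact hnd j ((isDefect_append_congr_of_le cs hle).mp hj)
  · obtain ⟨m, rfl⟩ : ∃ m, j = τ.length + (m + 1) := ⟨j - τ.length - 1, by omega⟩
    obtain ⟨hm, h⟩ := (htail true m).mp hj
    exact cs.length_mul_wordProd_eq_iff.mp hxa m hm (by simpa [maskProd, maskSubword] using h)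

end CoxeterSystem

/-- Changing the rightmost `0`-entry of a constant mask to `1` yields a constant mask. -/
theorem set_rightmost_zero_constant (cs : CoxeterSystem M W) {ω : List B} {σ : List Bool}
    (hred : cs.IsReduced ω) (hσ : IsConstantMask cs ω σ)
    (k : ℕ) (hk : k < σ.length) (h0 : σ.get ⟨k, hk⟩ = false)
    (hrt : ∀ j (hj : j < σ.length), k < j → σ.get ⟨j, hj⟩ = true) :
    IsConstantMask cs ω (σ.set k true) := by
  have hkω : k < ω.length := hσ.1 ▸ hk
  have hω : ω = ω.take k ++ ω[k] :: ω.drop (k + 1) := by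
    rw [← List.drop_eq_getElem_cons, List.take_append_drop]
  have hσ_eq : σ = σ.take k ++ false :: List.replicate (ω.drop (k + 1)).length true := by
    have htail : σ.drop (k + 1) = List.replicate (ω.drop (k + 1)).length true := by
      refine List.eq_replicate_iff.mpr ⟨by simp [hσ.1], fun b hb => ?_⟩
      obtain ⟨i, hi, rfl⟩ := List.mem_iff_getElem.mp hb
      simpa using hrt (k + 1 + i) (by simp at hi; omega) (by omega)
    rw [← htail, ← h0, List.get_eq_getElem, ← List.drop_eq_getElem_cons, List.take_append_drop]
  have hset : σ.set k true = σ.take k ++ true :: List.replicate (ω.drop (k + 1)).length true := by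
    conv_lhs => rw [hσ_eq]
    simp [hk.le]
  have hconst := cs.isConstantMask_append_true_of_append_false (τ := σ.take k)
    (by rwa [← hω]) (by simp [hσ.1]) (by rwa [← hω, ← hσ_eq])
  rwa [← hω, ← hset] at hconst
end

section
/- Let W be a Coxeter group and y < w in Bruhat order, and suppose there exists a generator s ∈ S with ys > y and ws < w. Then the map x ↦ xs restricted appropriately gives a complete matching of the Hasse diagram of [y,w]: precisely, for each x ∈ [y,w] the element xs also lies in [y,w], and the pairing x ↔ xs matches each element with one covering it or covered by it. -/
open CoxeterSystem

variable {B W : Type*} [Group W] {M : CoxeterMatrix B}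

/-!
Right multiplication by `s` moves every `x` one step up or down in Bruhat order, so the point is
that `xs` stays in `[y, w]`. If `x < xs`, then `xs ≤ w`: write `w` with a reduced word ending in
`s`; the products of its subwords are closed under right multiplication by `s`. If `xs < x`, then
`y ≤ xs`: write `x` with a reduced word ending in `s`; a reduced subword for `y` cannot use that
last letter, as `s` would then be a descent of `y`.

Both arguments need that every reduced word of `w` contains subwords for all `x ≤ w`, as well as
transitivity. These come from comparing the subword definition with the chain definition
(`u → ut` for reflections `t` raising the length): chains give subwords by the strong exchange
condition, proved with Tits' sign representation of `W` on `W × {±1}`, and subwords give chains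
by induction on length together with the lifting property of chains.
-/

open List

theorem List.sublist_append_singleton_iff {α : Type*} {l r : List α} {a : α} :
    l <+ r ++ [a] ↔ l <+ r ∨ ∃ l₁, l₁ <+ r ∧ l = l₁ ++ [a] := by
  refine ⟨fun h => ?_, ?_⟩
  · obtain ⟨l₁, l₂, rfl, h₁, h₂⟩ := sublist_append_iff.mp h
    rcases sublist_singleton.mp h₂ with rfl | rfl
    · exact Or.inl (by simpa using h₁)
    · exact Or.inr ⟨l₁, h₁, rfl⟩
  · rintro (h | ⟨l₁, h₁, rfl⟩)
    · exact h.trans (sublist_append_left r [a])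
    · exact h₁.append (Sublist.refl [a])

namespace CoxeterSystem

variable (cs : CoxeterSystem M W)

local prefix:100 "s" => cs.simple
local prefix:100 "π" => cs.wordProd
local prefix:100 "ℓ" => cs.length
local prefix:100 "ris " => cs.rightInvSeq

theorem simple_mul_mul_simple_eq_iff (i : B) (x y : W) :
    s i * x * s i = y ↔ x = s i * y * s i := by
  constructor <;> rintro rfl <;> simp [mul_assoc]

section SignRepresentation

variable [DecidableEq W]

def signPerm (i : B) : Equiv.Perm (W × ℤˣ) :=
  Function.Involutive.toPerm (fun p => (s i * p.1 * s i, (if p.1 = s i then -1 else 1) * p.2))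
    (by
      rintro ⟨x, ε⟩
      by_cases hx : x = s i
      · simp [hx]
      · simp [hx, mul_assoc, mul_eq_one_iff_eq_inv])

theorem signPerm_apply (i : B) (x : W) (ε : ℤˣ) :
    cs.signPerm i (x, ε) = (s i * x * s i, (if x = s i then -1 else 1) * ε) := rfl

theorem prod_map_signPerm_apply (ω : List B) (t : W) (ε : ℤˣ) :
    (ω.map cs.signPerm).prod (t, ε) =
      (π ω * t * (π ω)⁻¹, (-1) ^ (ris ω).count t * ε) := by
  induction ω with
  | nil => simp
  | cons i α ih =>
    have hris : ris (i :: α) = ((π α)⁻¹ * s i * π α) :: ris α := rfl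
    rw [map_cons, prod_cons, Equiv.Perm.mul_apply, ih, signPerm_apply, hris, wordProd_cons]
    refine Prod.ext ?_ ?_
    · simp only [mul_inv_rev, inv_simple]
      group
    · by_cases ht : t = (π α)⁻¹ * s i * π α
      · simp [ht, pow_succ, mul_assoc]
      · have hne : ¬π α * t * (π α)⁻¹ = s i := fun h => ht (by rw [← h]; group)
        simp [hne, count_cons_of_ne (Ne.symm ht)]

theorem pow_mul_signPerm_apply (i i' : B) (n : ℕ) (t : W) (ε : ℤˣ) :
    ((cs.signPerm i * cs.signPerm i') ^ n) (t, ε) =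
      ((s i * s i') ^ n * t * ((s i * s i') ^ n)⁻¹,
        (∏ j ∈ Finset.range (2 * n), if t = s i' * (s i * s i') ^ j then -1 else 1) * ε) := by
  set c := s i * s i'
  have hconj (k : ℕ) : (c ^ k)⁻¹ * s i' = s i' * c ^ k := by
    have h : SemiconjBy (s i') c c⁻¹ := by
      simp [c, SemiconjBy, mul_assoc]
    rw [← inv_pow, ← (h.pow_right k).eq]
  induction n with
  | zero => simp
  | succ n ih =>
    have hX (y : W) : c ^ n * t * (c ^ n)⁻¹ = y ↔ t = (c ^ n)⁻¹ * y * c ^ n := by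
      constructor <;> rintro rfl <;> group
    have h₀ : c ^ n * t * (c ^ n)⁻¹ = s i' ↔ t = s i' * c ^ (2 * n) := by
      rw [hX, hconj, two_mul, pow_add, mul_assoc]
    have h₁ : s i' * (c ^ n * t * (c ^ n)⁻¹) * s i' = s i ↔ t = s i' * c ^ (2 * n + 1) := by
      rw [simple_mul_mul_simple_eq_iff, hX, two_mul, pow_succ, pow_add,
        show (c ^ n)⁻¹ * (s i' * s i * s i') * c ^ n = (c ^ n)⁻¹ * s i' * c * c ^ n by
          simp [c, mul_assoc], hconj]
      group
    rw [pow_succ', Equiv.Perm.mul_apply, ih, Equiv.Perm.mul_apply, signPerm_apply, signPerm_apply]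
    refine Prod.ext ?_ ?_
    · simp only [c, pow_succ', mul_inv_rev, inv_simple]
      group
    · simp only [h₀, h₁, show 2 * (n + 1) = 2 * n + 1 + 1 by ring, Finset.prod_range_succ]
      simp only [mul_comm, mul_left_comm]

theorem isLiftable_signPerm : M.IsLiftable cs.signPerm := by
  intro i i'
  ext ⟨t, ε⟩ : 1
  have hc := cs.simple_mul_simple_pow i i'
  -- the sign is a product over `2 * M i i'` factors that repeats with period `M i i'`
  rw [pow_mul_signPerm_apply, hc, two_mul, Finset.prod_range_add]
  simp [pow_add, hc, Int.units_mul_self]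

def signRep : W →* Equiv.Perm (W × ℤˣ) :=
  cs.lift ⟨cs.signPerm, cs.isLiftable_signPerm⟩

theorem signRep_wordProd (ω : List B) : cs.signRep (π ω) = (ω.map cs.signPerm).prod := by
  rw [wordProd, map_list_prod, map_map]
  congr 1
  exact map_congr_left fun i _ => cs.lift_apply_simple cs.isLiftable_signPerm i

def reflSign (w t : W) : ℤˣ := (cs.signRep w (t, 1)).2

theorem reflSign_wordProd (ω : List B) (t : W) :
    cs.reflSign (π ω) t = (-1) ^ (ris ω).count t := by
  simp [reflSign, signRep_wordProd, prod_map_signPerm_apply]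

theorem signRep_apply (w t : W) (ε : ℤˣ) :
    cs.signRep w (t, ε) = (w * t * w⁻¹, cs.reflSign w t * ε) := by
  obtain ⟨ω, rfl⟩ := cs.wordProd_surjective w
  rw [signRep_wordProd, prod_map_signPerm_apply, reflSign_wordProd]

theorem reflSign_simple_self (i : B) : cs.reflSign (s i) (s i) = -1 := by
  simpa using cs.reflSign_wordProd [i] (s i)

theorem reflSign_self {t : W} (ht : cs.IsReflection t) : cs.reflSign t t = -1 := by
  obtain ⟨u, i, rfl⟩ := ht
  have hback := cs.signRep_apply u⁻¹ (u * s i * u⁻¹) 1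
  rw [show u⁻¹ * (u * s i * u⁻¹) * u⁻¹⁻¹ = s i by group, mul_one] at hback
  have hcancel : cs.reflSign u (s i) * cs.reflSign u⁻¹ (u * s i * u⁻¹) = 1 := by
    have h : cs.signRep u (cs.signRep u⁻¹ (u * s i * u⁻¹, 1)) = (u * s i * u⁻¹, 1) := by
      rw [← Equiv.Perm.mul_apply, ← map_mul, mul_inv_cancel, map_one, Equiv.Perm.one_apply]
    rw [hback, signRep_apply, Prod.ext_iff] at h
    exact h.2
  rw [reflSign, map_mul, map_mul, Equiv.Perm.mul_apply, Equiv.Perm.mul_apply, hback,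
    cs.signRep_apply (s i), reflSign_simple_self, cs.signRep_apply u]
  simp [hcancel]

theorem reflSign_mul_self {t : W} (ht : cs.IsReflection t) (w : W) :
    cs.reflSign (w * t) t = -cs.reflSign w t := by
  have h : cs.signRep (w * t) (t, 1) = cs.signRep w (t, -1) := by
    rw [map_mul, Equiv.Perm.mul_apply, cs.signRep_apply t, reflSign_self cs ht,
      mul_inv_cancel_right, mul_one]
  rw [reflSign, h, signRep_apply, mul_neg_one]

theorem mem_rightInvSeq_of_reflSign_eq_neg_one {ω : List B} {t : W}
    (h : cs.reflSign (π ω) t = -1) : t ∈ ris ω := by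
  by_contra hmem
  rw [reflSign_wordProd, count_eq_zero_of_not_mem hmem, pow_zero] at h
  exact absurd h (by decide)

end SignRepresentation

theorem isRightInversion_iff_mem_rightInvSeq {ω : List B} (hω : cs.IsReduced ω) {t : W} :
    cs.IsRightInversion (π ω) t ↔ t ∈ ris ω := by
  classical
  refine ⟨fun ⟨ht, hlt⟩ => ?_, cs.isRightInversion_of_mem_rightInvSeq hω⟩
  by_contra hmem
  obtain ⟨ω', hω', hω't⟩ := cs.exists_isReduced (π ω * t)
  have hsign : cs.reflSign (π ω') t = -1 := by
    rw [← hω't, reflSign_mul_self _ ht, reflSign_wordProd, count_eq_zero_of_not_mem hmem,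
      pow_zero]
  have hinv := (cs.isRightInversion_of_mem_rightInvSeq hω'
    (cs.mem_rightInvSeq_of_reflSign_eq_neg_one hsign)).2
  rw [← hω't, mul_assoc, ht.mul_self, mul_one] at hinv
  omega

theorem exists_wordProd_eraseIdx_eq_mul {ω : List B} (hω : cs.IsReduced ω) {t : W}
    (h : cs.IsRightInversion (π ω) t) : ∃ j < ω.length, π (ω.eraseIdx j) = π ω * t := by
  obtain ⟨j, hj, rfl⟩ := mem_iff_getElem.mp ((cs.isRightInversion_iff_mem_rightInvSeq hω).mp h)
  rw [length_rightInvSeq] at hj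
  refine ⟨j, hj, ?_⟩
  rw [← wordProd_mul_getD_rightInvSeq, getD_eq_getElem]

theorem exists_isReduced_sublist (ω : List B) :
    ∃ χ, χ <+ ω ∧ cs.IsReduced χ ∧ π χ = π ω := by
  induction ω using List.reverseRecOn with
  | nil => exact ⟨[], Sublist.slnil, by simp [IsReduced], rfl⟩
  | append_singleton α b ih =>
    obtain ⟨χ, hχα, hχ, hπ⟩ := ih
    rw [wordProd_append, wordProd_singleton, ← hπ]
    rcases cs.length_mul_simple (π χ) b with hup | hdown
    · refine ⟨χ ++ [b], hχα.append (Sublist.refl _), ?_, by simp [wordProd_append]⟩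
      rw [IsReduced, wordProd_append, wordProd_singleton, hup, hχ.eq, length_append,
        length_singleton]
    · obtain ⟨j, hj, hjπ⟩ := cs.exists_wordProd_eraseIdx_eq_mul hχ
        ⟨cs.isReflection_simple b, by omega⟩
      refine ⟨χ.eraseIdx j, ((eraseIdx_sublist χ j).trans hχα).trans (sublist_append_left _ _),
        ?_, hjπ⟩
      rw [IsReduced, hjπ, length_eraseIdx_of_lt hj]
      have := hχ.eq
      omega

theorem exists_isReduced_append_singleton_of_isRightDescent {w : W} {i : B}
    (h : cs.IsRightDescent w i) : ∃ α, cs.IsReduced (α ++ [i]) ∧ π (α ++ [i]) = w := by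
  obtain ⟨α, hα, hαπ⟩ := cs.exists_isReduced (w * s i)
  have hπ : π (α ++ [i]) = w := by
    rw [wordProd_append, wordProd_singleton, ← hαπ, simple_mul_simple_cancel_right]
  refine ⟨α, ?_, hπ⟩
  rw [IsReduced, hπ, length_append, length_singleton, ← hα.eq, ← hαπ]
  exact (cs.isRightDescent_iff.mp h).symm

theorem exists_sublist_wordProd_eq_mul_simple {α ψ : List B} {i : B} (h : ψ <+ α ++ [i]) :
    ∃ ψ', ψ' <+ α ++ [i] ∧ π ψ' = π ψ * s i := by
  rcases sublist_append_singleton_iff.mp h with hψ | ⟨ψ₁, hψ₁, rfl⟩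
  · exact ⟨ψ ++ [i], hψ.append (Sublist.refl _), by simp [wordProd_append]⟩
  · refine ⟨ψ₁, hψ₁.trans (sublist_append_left _ _), ?_⟩
    simp [wordProd_append, mul_assoc]

def BruhatStep (u v : W) : Prop := ∃ t, cs.IsReflection t ∧ v = u * t ∧ ℓ u < ℓ v

def ChainLE : W → W → Prop := Relation.ReflTransGen cs.BruhatStep

variable {cs}

theorem bruhatStep_mul_simple {w : W} {i : B} (h : ¬cs.IsRightDescent w i) :
    cs.BruhatStep w (w * s i) :=
  ⟨s i, cs.isReflection_simple i, rfl, by rw [cs.not_isRightDescent_iff.mp h]; omega⟩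

theorem ChainLE.exists_sublist {u w : W} (h : cs.ChainLE u w) {ω : List B} (hω : cs.IsReduced ω)
    (hπ : π ω = w) : ∃ ψ, ψ <+ ω ∧ cs.IsReduced ψ ∧ π ψ = u := by
  induction h generalizing ω with
  | refl => exact ⟨ω, Sublist.refl ω, hω, hπ⟩
  | tail _ hbc ih =>
    obtain ⟨t, ht, rfl, hlt⟩ := hbc
    -- strong exchange removes one letter of `ω`, deletion makes the result reduced again
    obtain ⟨j, -, hj⟩ := cs.exists_wordProd_eraseIdx_eq_mul hω
      ⟨ht, by rwa [hπ, mul_assoc, ht.mul_self, mul_one]⟩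
    obtain ⟨χ, hχ, hχred, hχπ⟩ := cs.exists_isReduced_sublist (ω.eraseIdx j)
    obtain ⟨ψ, hψ, hψred, hψπ⟩ :=
      ih hχred (by rw [hχπ, hj, hπ, mul_assoc, ht.mul_self, mul_one])
    exact ⟨ψ, (hψ.trans hχ).trans (eraseIdx_sublist ω j), hψred, hψπ⟩

/-- The lifting property of chains, assuming `chainLE_wordProd_of_sublist` for words shorter
than `v`; the two are proved by a joint induction on length. -/
theorem ChainLE.mul_simple_of_forall_sublist {u v : W} {i : B}
    (hsub : ∀ ω φ : List B, cs.IsReduced ω → ω.length < ℓ v → φ <+ ω → cs.ChainLE (π φ) (π ω))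
    (h : cs.ChainLE u v) (hv : ¬cs.IsRightDescent v i) :
    cs.ChainLE (u * s i) (v * s i) := by
  induction h with
  | refl => exact .refl
  | @tail b c hub hbc ih =>
    obtain ⟨t, ht, rfl, hlt⟩ := hbc
    by_cases hb : cs.IsRightDescent b i
    · obtain ⟨α, hα, hαπ⟩ := cs.exists_isReduced_append_singleton_of_isRightDescent hb
      obtain ⟨ψ, hψ, -, rfl⟩ := ChainLE.exists_sublist hub hα hαπ
      obtain ⟨ψ', hψ', hψ'π⟩ := cs.exists_sublist_wordProd_eq_mul_simple hψ
      have hus : cs.ChainLE (π ψ * s i) b := by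
        rw [← hψ'π, ← hαπ]
        exact hsub _ _ hα (by rw [← hα.eq, hαπ]; exact hlt) hψ'
      exact (hus.tail ⟨t, ht, rfl, hlt⟩).tail (bruhatStep_mul_simple hv)
    · refine (ih (fun ω φ hω hlen => hsub ω φ hω (by omega)) hb).tail
        ⟨s i * t * s i, by simpa using ht.conj (s i), by simp [mul_assoc], ?_⟩
      rw [cs.not_isRightDescent_iff.mp hb, cs.not_isRightDescent_iff.mp hv]
      omega

theorem chainLE_wordProd_of_sublist {ω φ : List B} (hω : cs.IsReduced ω) (h : φ <+ ω) :
    cs.ChainLE (π φ) (π ω) := by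
  induction hn : ω.length using Nat.strong_induction_on generalizing ω φ with
  | _ n ih =>
  subst hn
  obtain rfl | ⟨α, b, rfl⟩ := ω.eq_nil_or_concat'
  · rw [sublist_nil.mp h]
    exact .refl
  · have hα : cs.IsReduced α := by simpa using hω.take α.length
    have hαb : ¬cs.IsRightDescent (π α) b := by
      rw [cs.not_isRightDescent_iff, ← wordProd_singleton cs b, ← wordProd_append, hω.eq, hα.eq,
        length_append, length_singleton]
    have hstep : cs.BruhatStep (π α) (π (α ++ [b])) := by
      simpa [wordProd_append] using bruhatStep_mul_simple hαb
    rcases sublist_append_singleton_iff.mp h with hφ | ⟨φ₁, hφ₁, rfl⟩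
    · exact (ih _ (by simp) hα hφ rfl).tail hstep
    · simp only [wordProd_append, wordProd_singleton]
      refine (ih _ (by simp) hα hφ₁ rfl).mul_simple_of_forall_sublist
        (fun ω' φ' hω' hlen hφ' => ?_) hαb
      rw [hα.eq] at hlen
      exact ih _ (by simp; omega) hω' hφ' rfl

end CoxeterSystem

section BruhatOrder

variable {cs : CoxeterSystem M W}

theorem bruhatLE_iff_chainLE {x w : W} : bruhatLE cs x w ↔ cs.ChainLE x w := by
  refine ⟨fun ⟨ω, φ, hω, hπ, hφ, hφπ⟩ => hπ ▸ hφπ ▸ cs.chainLE_wordProd_of_sublist hω hφ,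
    fun h => ?_⟩
  obtain ⟨ω, hω, rfl⟩ := cs.exists_isReduced w
  obtain ⟨ψ, hψ, -, rfl⟩ := h.exists_sublist hω rfl
  exact ⟨ω, ψ, hω, rfl, hψ, rfl⟩

namespace bruhatLE

theorem trans {x y z : W} (hxy : bruhatLE cs x y) (hyz : bruhatLE cs y z) : bruhatLE cs x z :=
  bruhatLE_iff_chainLE.mpr ((bruhatLE_iff_chainLE.mp hxy).trans (bruhatLE_iff_chainLE.mp hyz))

theorem exists_sublist {x w : W} (h : bruhatLE cs x w) {ω : List B} (hω : cs.IsReduced ω)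
    (hπ : cs.wordProd ω = w) :
    ∃ ψ, ψ <+ ω ∧ cs.IsReduced ψ ∧ cs.wordProd ψ = x :=
  CoxeterSystem.ChainLE.exists_sublist (bruhatLE_iff_chainLE.mp h) hω hπ

theorem mul_simple_of_isRightDescent {x w : W} {i : B} (h : bruhatLE cs x w)
    (hw : cs.IsRightDescent w i) : bruhatLE cs (x * cs.simple i) w := by
  obtain ⟨α, hα, hαπ⟩ := cs.exists_isReduced_append_singleton_of_isRightDescent hw
  obtain ⟨ψ, hψ, -, rfl⟩ := h.exists_sublist hα hαπ
  obtain ⟨ψ', hψ', hψ'π⟩ := cs.exists_sublist_wordProd_eq_mul_simple hψ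
  exact ⟨_, ψ', hα, hαπ, hψ', hψ'π⟩

theorem le_mul_simple_of_isRightDescent {y x : W} {i : B} (h : bruhatLE cs y x)
    (hx : cs.IsRightDescent x i) (hy : ¬cs.IsRightDescent y i) :
    bruhatLE cs y (x * cs.simple i) := by
  obtain ⟨α, hα, hαπ⟩ := cs.exists_isReduced_append_singleton_of_isRightDescent hx
  obtain ⟨ψ, hψ, hψred, rfl⟩ := h.exists_sublist hα hαπ
  have hxi : x * cs.simple i = cs.wordProd α := by
    rw [← hαπ, cs.wordProd_append, cs.wordProd_singleton, cs.simple_mul_simple_cancel_right]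
  rcases List.sublist_append_singleton_iff.mp hψ with hψα | ⟨ψ₁, -, rfl⟩
  · exact ⟨α, ψ, by simpa using hα.take α.length, hxi.symm, hψα, rfl⟩
  · -- a reduced subword ending in `i` would make `i` a descent of `y`
    refine absurd ?_ hy
    have := cs.length_wordProd_le ψ₁
    rw [CoxeterSystem.IsRightDescent, hψred.eq, cs.wordProd_append, cs.wordProd_singleton,
      cs.simple_mul_simple_cancel_right, List.length_append, List.length_singleton]
    omega

end bruhatLE

theorem bruhatCovers_mul_simple {x : W} {i : B} (h : ¬cs.IsRightDescent x i) :
    bruhatCovers cs x (x * cs.simple i) := by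
  have hlen := cs.not_isRightDescent_iff.mp h
  exact ⟨⟨bruhatLE_iff_chainLE.mpr (.single (CoxeterSystem.bruhatStep_mul_simple h)),
    fun hx => by rw [← hx] at hlen; omega⟩, hlen⟩

theorem bruhatCovers_mul_simple_of_isRightDescent {x : W} {i : B} (h : cs.IsRightDescent x i) :
    bruhatCovers cs (x * cs.simple i) x := by
  simpa using bruhatCovers_mul_simple (cs.isRightDescent_iff_not_isRightDescent_mul.mp h)

end BruhatOrder

theorem special_matching_general (cs : CoxeterSystem M W) {y w : W} (i : B)
    (hy : ¬ cs.IsRightDescent y i) (hw : cs.IsRightDescent w i) :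
    ∀ x : W, bruhatLE cs y x → bruhatLE cs x w →
      (bruhatLE cs y (x * cs.simple i) ∧ bruhatLE cs (x * cs.simple i) w) ∧
      (bruhatCovers cs x (x * cs.simple i) ∨ bruhatCovers cs (x * cs.simple i) x) := by
  intro x hyx hxw
  by_cases hx : cs.IsRightDescent x i
  · have hcov := bruhatCovers_mul_simple_of_isRightDescent hx
    exact ⟨⟨hyx.le_mul_simple_of_isRightDescent hx hy, hcov.1.1.trans hxw⟩, .inr hcov⟩
  · have hcov := bruhatCovers_mul_simple hx
    exact ⟨⟨hyx.trans hcov.1.1, hxw.mul_simple_of_isRightDescent hw⟩, .inl hcov⟩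

/-- **Verma's special matching.** If `y < w`, `s i` is a right ascent of `y` and a right
descent of `w`, then right multiplication by `s i` preserves the interval `[y, w]` and
matches each element of `[y, w]` with one covering it or covered by it. -/
theorem special_matching (cs : CoxeterSystem M W) {y w : W} (i : B)
    (hyw : bruhatLT cs y w) (hy : ¬ cs.IsRightDescent y i) (hw : cs.IsRightDescent w i) :
    ∀ x : W, bruhatLE cs y x → bruhatLE cs x w →
      (bruhatLE cs y (x * cs.simple i) ∧ bruhatLE cs (x * cs.simple i) w) ∧
      (bruhatCovers cs x (x * cs.simple i) ∨ bruhatCovers cs (x * cs.simple i) x) :=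
  special_matching_general cs i hy hw
end
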